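/- arXiv:2302.10065 — 3 statements merged into one kernel-verified Lean document; each statement's English description precedes it below -/
import Mathlib

section
/- Let f : ℝⁿ → ℝ be twice continuously differentiable with L_H-Lipschitz Hessian. Fix x ∈ ℝⁿ, set g := ∇f(x) and H := ∇²f(x), and suppose g ≠ 0. Let σ > 0, ς₃ ∈ [0,1), κ_θ > 0, κ_C > 0, set μ := [−λ_min(H)]₊, and suppose μ ≤ κ_C·√(σ‖g‖). Let s ∈ ℝⁿ satisfy ‖(H + (√(σ‖g‖) + μ)·I)s + g‖ ≤ min(ς₃·√(σ‖g‖)·‖s‖, κ_θ·‖g‖). Then ‖∇f(x+s)‖ ≤ (L_H(1+κ_θ)/(2σ) + 1 + ς₃ + κ_C)·(1+κ_θ)·‖g‖. -/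
/-!
Put `g = ∇f(x)`, `λ = √(σ‖g‖)` and let `r` be the residual of the regularized Newton equation.
Since `⟪s, ∇²f(x) s⟫ ≥ -μ‖s‖²`, pairing `r` with `s` gives `λ‖s‖ ≤ ‖g‖ + ‖r‖ ≤ (1 + κθ)‖g‖`.
Writing `∇f(x+s) = (∇f(x+s) - g - ∇²f(x) s) + r - (λ + μ) s`, the Lipschitz Hessian bounds
the first term by `L_H‖s‖²/2 ≤ L_H(1 + κθ)²‖g‖/(2σ)`, and `‖r‖ ≤ ς₃ λ‖s‖`, `μ ≤ κ_C λ` bound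
the other two by multiples of `λ‖s‖ ≤ (1 + κθ)‖g‖`.
-/

open RealInnerProductSpace

/-- The smallest eigenvalue of a symmetric operator on ℝⁿ, as the infimum of the
Rayleigh quotient over the unit sphere. -/
noncomputable def lamMin {n : ℕ} (T : EuclideanSpace ℝ (Fin n) → EuclideanSpace ℝ (Fin n)) : ℝ :=
  sInf {r : ℝ | ∃ v : EuclideanSpace ℝ (Fin n), ‖v‖ = 1 ∧ ⟪v, T v⟫ = r}

theorem norm_sub_sub_fderiv_apply_le_of_lipschitz {E F : Type*}
    [NormedAddCommGroup E] [NormedSpace ℝ E] [NormedAddCommGroup F] [NormedSpace ℝ F]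
    {G : E → F} {DG : E → E →L[ℝ] F} {L : ℝ} (hG : ∀ y, HasFDerivAt G (DG y) y)
    (x : E) (hDG : ∀ y, ‖DG y - DG x‖ ≤ L * ‖y - x‖) (s : E) :
    ‖G (x + s) - G x - DG x s‖ ≤ L / 2 * ‖s‖ ^ 2 := by
  -- fence `t ↦ G (x + t • s) - G x - t • DG x s` on `[0, 1]` by `t ↦ L ‖s‖² t² / 2`
  let φ : ℝ → F := fun t => G (x + t • s) - G x - t • DG x s
  have hφ : ∀ t, HasDerivAt φ (DG (x + t • s) s - DG x s) t := by
    intro t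
    have hline : HasDerivAt (fun t : ℝ => x + t • s) s t := by
      simpa using ((hasDerivAt_id t).smul_const s).const_add x
    have h := (((hG _).comp_hasDerivAt t hline).sub_const (G x)).sub
      ((hasDerivAt_id t).smul_const (DG x s))
    rwa [one_smul] at h
  have hbound : ∀ t ∈ Set.Ico (0 : ℝ) 1,
      ‖DG (x + t • s) s - DG x s‖ ≤ L * ‖s‖ ^ 2 * t := by
    rintro t ⟨ht, -⟩
    calc ‖DG (x + t • s) s - DG x s‖ ≤ ‖DG (x + t • s) - DG x‖ * ‖s‖ :=
          (DG (x + t • s) - DG x).le_opNorm s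
      _ ≤ L * ‖t • s‖ * ‖s‖ := by
          gcongr
          simpa using hDG (x + t • s)
      _ = L * ‖s‖ ^ 2 * t := by
          rw [norm_smul, Real.norm_of_nonneg ht]
          ring
  have hB : ∀ t, HasDerivAt (fun t : ℝ => L / 2 * ‖s‖ ^ 2 * t ^ 2) (L * ‖s‖ ^ 2 * t) t :=
    fun t => ((hasDerivAt_pow 2 t).const_mul (L / 2 * ‖s‖ ^ 2)).congr_deriv (by ring)
  simpa [φ] using image_norm_le_of_norm_deriv_right_le_deriv_boundary
    (fun t _ => (hφ t).continuousAt.continuousWithinAt) (fun t _ => (hφ t).hasDerivWithinAt)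
    (by simp [φ]) hB hbound (Set.right_mem_Icc.2 zero_le_one)

theorem norm_image_add_le_of_lipschitz_fderiv {E : Type*} [NormedAddCommGroup E] [NormedSpace ℝ E]
    {G : E → E} {DG : E → E →L[ℝ] E} {L : ℝ} (hG : ∀ y, HasFDerivAt G (DG y) y)
    (x : E) (hDG : ∀ y, ‖DG y - DG x‖ ≤ L * ‖y - x‖) (s : E) {c : ℝ} (hc : 0 ≤ c) :
    ‖G (x + s)‖ ≤ L / 2 * ‖s‖ ^ 2 + ‖DG x s + c • s + G x‖ + c * ‖s‖ := by
  calc ‖G (x + s)‖ = ‖(G (x + s) - G x - DG x s) + (DG x s + c • s + G x) - c • s‖ := by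
        abel_nf
    _ ≤ ‖G (x + s) - G x - DG x s‖ + ‖DG x s + c • s + G x‖ + ‖c • s‖ :=
        (norm_sub_le _ _).trans (add_le_add_left (norm_add_le _ _) _)
    _ ≤ _ := by
        rw [norm_smul, Real.norm_of_nonneg hc]
        gcongr
        exact norm_sub_sub_fderiv_apply_le_of_lipschitz hG x hDG s

theorem nonneg_of_norm_sub_le_mul_norm_sub {E F : Type*} [NormedAddCommGroup E]
    [SeminormedAddCommGroup F] {φ : E → F} {L : ℝ} (h : ∀ y z, ‖φ y - φ z‖ ≤ L * ‖y - z‖)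
    {y z : E} (hyz : y ≠ z) : 0 ≤ L :=
  nonneg_of_mul_nonneg_left ((norm_nonneg _).trans (h y z)) (norm_pos_iff.2 (sub_ne_zero.2 hyz))

theorem lamMin_mul_sq_le_inner {n : ℕ} (T : EuclideanSpace ℝ (Fin n) →L[ℝ] EuclideanSpace ℝ (Fin n))
    (s : EuclideanSpace ℝ (Fin n)) :
    lamMin (fun v => T v) * ‖s‖ ^ 2 ≤ ⟪s, T s⟫ := by
  rcases eq_or_ne s 0 with rfl | hs
  · simp
  have hs' : 0 < ‖s‖ := norm_pos_iff.2 hs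
  have hbdd : BddBelow {r : ℝ | ∃ v : EuclideanSpace ℝ (Fin n), ‖v‖ = 1 ∧ ⟪v, T v⟫ = r} := by
    refine ⟨-‖T‖, ?_⟩
    rintro _ ⟨v, hv, rfl⟩
    refine neg_le_of_abs_le ((abs_real_inner_le_norm v (T v)).trans ?_)
    simpa [hv] using T.le_opNorm v
  have hunit : lamMin (fun v => T v) ≤ ⟪‖s‖⁻¹ • s, T (‖s‖⁻¹ • s)⟫ :=
    csInf_le hbdd ⟨_, by rw [norm_smul, norm_inv, norm_norm, inv_mul_cancel₀ hs'.ne'], rfl⟩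
  rw [map_smul, real_inner_smul_left, real_inner_smul_right, ← mul_assoc, ← sq, inv_pow,
    ← div_eq_inv_mul] at hunit
  rwa [← le_div_iff₀ (by positivity)]

theorem neg_max_neg_lamMin_mul_sq_le_inner {n : ℕ}
    (T : EuclideanSpace ℝ (Fin n) →L[ℝ] EuclideanSpace ℝ (Fin n)) (s : EuclideanSpace ℝ (Fin n)) :
    -(max (-(lamMin fun v => T v)) 0 * ‖s‖ ^ 2) ≤ ⟪s, T s⟫ := by
  rw [← neg_mul]
  exact (mul_le_mul_of_nonneg_right (neg_le.1 (le_max_left _ _)) (sq_nonneg ‖s‖)).trans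
    (lamMin_mul_sq_le_inner T s)

theorem mul_norm_le_norm_add_norm_add_smul_add {E : Type*}
    [NormedAddCommGroup E] [InnerProductSpace ℝ E]
    (s a g : E) (lam μ : ℝ) (ha : -(μ * ‖s‖ ^ 2) ≤ ⟪s, a⟫) :
    lam * ‖s‖ ≤ ‖g‖ + ‖a + (lam + μ) • s + g‖ := by
  rcases eq_or_ne s 0 with rfl | hs
  · simp only [norm_zero, mul_zero, smul_zero, add_zero]
    positivity
  have key : ⟪s, a + (lam + μ) • s + g⟫ = ⟪s, a⟫ + (lam + μ) * ‖s‖ ^ 2 + ⟪s, g⟫ := by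
    rw [inner_add_right, inner_add_right, real_inner_smul_right, real_inner_self_eq_norm_sq]
  have h1 := real_inner_le_norm s (a + (lam + μ) • s + g)
  have h2 := neg_abs_le ⟪s, g⟫
  have h3 := abs_real_inner_le_norm s g
  refine le_of_mul_le_mul_left ?_ (norm_pos_iff.2 hs)
  nlinarith

theorem gradient_growth_neig_step_general {n : ℕ}
    (f : EuclideanSpace ℝ (Fin n) → ℝ)
    (Hess : EuclideanSpace ℝ (Fin n) → EuclideanSpace ℝ (Fin n) →L[ℝ] EuclideanSpace ℝ (Fin n))
    (LH : ℝ)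
    (hHess : ∀ y, HasFDerivAt (gradient f) (Hess y) y)
    (hLip : ∀ y z, ‖Hess y - Hess z‖ ≤ LH * ‖y - z‖)
    (x s : EuclideanSpace ℝ (Fin n))
    (hg : gradient f x ≠ 0)
    (σ ς₃ κθ κC : ℝ) (hσ : 0 < σ) (hς₃0 : 0 ≤ ς₃)
    (hκC : 0 < κC)
    (μ : ℝ) (hμ : μ = max (-(lamMin fun v => Hess x v)) 0)
    (hμκ : μ ≤ κC * Real.sqrt (σ * ‖gradient f x‖))
    (hres : ‖Hess x s + (Real.sqrt (σ * ‖gradient f x‖) + μ) • s + gradient f x‖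
      ≤ min (ς₃ * Real.sqrt (σ * ‖gradient f x‖) * ‖s‖) (κθ * ‖gradient f x‖)) :
    ‖gradient f (x + s)‖
      ≤ (LH * (1 + κθ) / (2 * σ) + 1 + ς₃ + κC) * (1 + κθ) * ‖gradient f x‖ := by
  set g := gradient f x
  set lam := Real.sqrt (σ * ‖g‖)
  have hG : 0 < ‖g‖ := norm_pos_iff.2 hg
  have hLH : 0 ≤ LH := nonneg_of_norm_sub_le_mul_norm_sub hLip
    (by simpa using hg : x + g ≠ x)
  have hcurv : -(μ * ‖s‖ ^ 2) ≤ ⟪s, Hess x s⟫ := hμ ▸ neg_max_neg_lamMin_mul_sq_le_inner _ s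
  have hstep : lam * ‖s‖ ≤ (1 + κθ) * ‖g‖ := by
    linarith [mul_norm_le_norm_add_norm_add_smul_add s (Hess x s) g lam μ hcurv,
      hres.trans (min_le_right _ _)]
  have hgrowth := norm_image_add_le_of_lipschitz_fderiv hHess x (fun y => hLip y x) s
    (c := lam + μ) (add_nonneg (Real.sqrt_nonneg _) (hμ ▸ le_max_right _ _))
  have hs2 : σ * ‖s‖ ^ 2 ≤ (1 + κθ) ^ 2 * ‖g‖ := by
    refine le_of_mul_le_mul_left ?_ hG
    calc ‖g‖ * (σ * ‖s‖ ^ 2) = (lam * ‖s‖) ^ 2 := by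
          rw [mul_pow, Real.sq_sqrt (by positivity)]; ring
      _ ≤ ((1 + κθ) * ‖g‖) ^ 2 := pow_le_pow_left₀ (by positivity) hstep 2
      _ = ‖g‖ * ((1 + κθ) ^ 2 * ‖g‖) := by ring
  have hquad : LH / 2 * ‖s‖ ^ 2 ≤ LH * (1 + κθ) ^ 2 * ‖g‖ / (2 * σ) := by
    rw [le_div_iff₀ (by positivity)]
    linarith [mul_le_mul_of_nonneg_left hs2 hLH]
  have hres' : ‖Hess x s + (lam + μ) • s + g‖ ≤ ς₃ * (lam * ‖s‖) := by
    rw [← mul_assoc]; exact hres.trans (min_le_left _ _)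
  have hshift : μ * ‖s‖ ≤ κC * (lam * ‖s‖) := by
    rw [← mul_assoc]; exact mul_le_mul_of_nonneg_right hμκ (norm_nonneg s)
  calc ‖gradient f (x + s)‖
      ≤ LH * (1 + κθ) ^ 2 * ‖g‖ / (2 * σ) + (ς₃ + 1 + κC) * (lam * ‖s‖) := by linarith
    _ ≤ LH * (1 + κθ) ^ 2 * ‖g‖ / (2 * σ) + (ς₃ + 1 + κC) * ((1 + κθ) * ‖g‖) := by gcongr
    _ = _ := by field_simp; ring

/-- Lemma 3.3 of the paper, inequality (3.15): gradient growth after a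
regularized Newton step. -/
theorem gradient_growth_neig_step {n : ℕ}
    (f : EuclideanSpace ℝ (Fin n) → ℝ)
    (Hess : EuclideanSpace ℝ (Fin n) → EuclideanSpace ℝ (Fin n) →L[ℝ] EuclideanSpace ℝ (Fin n))
    (LH : ℝ)
    (hf : ContDiff ℝ 2 f)
    (hHess : ∀ y, HasFDerivAt (gradient f) (Hess y) y)
    (hLip : ∀ y z, ‖Hess y - Hess z‖ ≤ LH * ‖y - z‖)
    (x s : EuclideanSpace ℝ (Fin n))
    (hg : gradient f x ≠ 0)
    (σ ς₃ κθ κC : ℝ) (hσ : 0 < σ) (hς₃0 : 0 ≤ ς₃) (hς₃1 : ς₃ < 1) (hκθ : 0 < κθ)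
    (hκC : 0 < κC)
    (μ : ℝ) (hμ : μ = max (-(lamMin fun v => Hess x v)) 0)
    (hμκ : μ ≤ κC * Real.sqrt (σ * ‖gradient f x‖))
    (hres : ‖Hess x s + (Real.sqrt (σ * ‖gradient f x‖) + μ) • s + gradient f x‖
      ≤ min (ς₃ * Real.sqrt (σ * ‖gradient f x‖) * ‖s‖) (κθ * ‖gradient f x‖)) :
    ‖gradient f (x + s)‖
      ≤ (LH * (1 + κθ) / (2 * σ) + 1 + ς₃ + κC) * (1 + κθ) * ‖gradient f x‖ :=
  gradient_growth_neig_step_general f Hess LH hHess hLip x s hg σ ς₃ κθ κC hσ hς₃0 hκC μ hμ hμκ hres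
end

section
/- Let f : ℝⁿ → ℝ be twice continuously differentiable with L_H-Lipschitz Hessian, L_H > 0. Fix x ∈ ℝⁿ, set g := ∇f(x) and H := ∇²f(x), and suppose g ≠ 0. Let σ > 0, ς₃ ∈ [0,1), κ_θ > 0, κ_C > 0, κ_a ≥ 1, η₁ > 0, set μ := [−λ_min(H)]₊, and suppose μ ≤ κ_C·√(σ‖g‖). Let s ∈ ℝⁿ satisfy ‖(H + (√(σ‖g‖) + μ)·I)s + g‖ ≤ ς₃·√(σ‖g‖)·‖s‖, and suppose the acceptance condition f(x) − f(x+s) ≥ η₁·(−⟨g,s⟩ − (1/2)⟨s,Hs⟩) holds. Then f(x) − f(x+s) ≥ η₁·(1−ς₃)·√(σ‖g‖)·((−(2+κ_C)·√(κ_a σ‖g‖) + √((2+κ_C)²·κ_a σ‖g‖ + 2 L_H ‖∇f(x+s)‖))/L_H)². -/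
/-!
Write `λ = √(σ‖g‖)` and `r = (H + (λ + μ) I) s + g` for the residual of the step. Since
`H + μ I ⪰ 0`, testing `r` against `s` bounds the model decrease `-⟪g, s⟫ - ⟪s, H s⟫ / 2`
from below by `(1 - ς₃) λ ‖s‖²`. On the other hand, the Taylor expansion of `∇f` with
Lipschitz Hessian and `∇f(x) + H s = r - (λ + μ) s` give
`‖∇f(x + s)‖ ≤ (L_H / 2) ‖s‖² + A ‖s‖` with `A = (2 + κ_C) √(κ_a σ ‖g‖)`, so `‖s‖` is at least
the positive root of `(L_H / 2) t² + A t = ‖∇f(x + s)‖`. The acceptance test turns the model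
decrease into decrease of `f`.
-/

open RealInnerProductSpace

theorem norm_add_sub_sub_fderiv_le_of_fderiv_lipschitz
    {E F : Type*} [NormedAddCommGroup E] [NormedSpace ℝ E]
    [NormedAddCommGroup F] [NormedSpace ℝ F]
    {φ : E → F} {φ' : E → E →L[ℝ] F} {L : ℝ}
    (hφ : ∀ y, HasFDerivAt φ (φ' y) y) (hLip : ∀ y z, ‖φ' y - φ' z‖ ≤ L * ‖y - z‖)
    (x s : E) :
    ‖φ (x + s) - φ x - φ' x s‖ ≤ L / 2 * ‖s‖ ^ 2 := by
  set ψ : ℝ → F := fun t => φ (x + t • s) - φ x - t • φ' x s with hψ_def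
  have hψ : ∀ t : ℝ, HasDerivAt ψ (φ' (x + t • s) s - φ' x s) t := by
    intro t
    have hline : HasDerivAt (fun t : ℝ => x + t • s) s t := by
      simpa using ((hasDerivAt_id t).smul_const s).const_add x
    have hlin : HasDerivAt (fun t : ℝ => t • φ' x s) (φ' x s) t := by
      simpa using (hasDerivAt_id t).smul_const (φ' x s)
    exact (((hφ _).comp_hasDerivAt t hline).sub_const (φ x)).sub hlin
  have hψ'_le : ∀ t ∈ Set.Ico (0 : ℝ) 1, ‖φ' (x + t • s) s - φ' x s‖ ≤ L * ‖s‖ ^ 2 * t := by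
    rintro t ⟨ht, -⟩
    calc ‖φ' (x + t • s) s - φ' x s‖ = ‖(φ' (x + t • s) - φ' x) s‖ := rfl
      _ ≤ ‖φ' (x + t • s) - φ' x‖ * ‖s‖ := ContinuousLinearMap.le_opNorm _ s
      _ ≤ L * ‖x + t • s - x‖ * ‖s‖ := by gcongr; exact hLip _ _
      _ = L * ‖s‖ ^ 2 * t := by
        rw [add_sub_cancel_left, norm_smul, Real.norm_of_nonneg ht]; ring
  have hB : ∀ t : ℝ, HasDerivAt (fun t => L / 2 * ‖s‖ ^ 2 * t ^ 2) (L * ‖s‖ ^ 2 * t) t :=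
    fun t => ((hasDerivAt_pow 2 t).const_mul (L / 2 * ‖s‖ ^ 2)).congr_deriv (by push_cast; ring)
  have := image_norm_le_of_norm_deriv_right_le_deriv_boundary
    (fun t _ => (hψ t).continuousAt.continuousWithinAt) (fun t _ => (hψ t).hasDerivWithinAt)
    (by simp [hψ_def]) hB hψ'_le (Set.right_mem_Icc.mpr zero_le_one)
  simpa [hψ_def] using this

theorem lamMin_mul_norm_sq_le_inner {n : ℕ}
    (H : EuclideanSpace ℝ (Fin n) →L[ℝ] EuclideanSpace ℝ (Fin n)) (s : EuclideanSpace ℝ (Fin n)) :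
    lamMin (fun v => H v) * ‖s‖ ^ 2 ≤ ⟪s, H s⟫ := by
  rcases eq_or_ne s 0 with rfl | hs
  · simp
  have hs_pos : 0 < ‖s‖ := norm_pos_iff.mpr hs
  have hbdd : BddBelow {r : ℝ | ∃ v : EuclideanSpace ℝ (Fin n), ‖v‖ = 1 ∧ ⟪v, H v⟫ = r} := by
    refine ⟨-‖H‖, ?_⟩
    rintro r ⟨w, hw, rfl⟩
    have := (abs_real_inner_le_norm w (H w)).trans (mul_le_mul_of_nonneg_left (H.le_opNorm w)
      (norm_nonneg w))
    rw [hw, one_mul, mul_one] at this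
    exact neg_le_of_abs_le this
  have hunit : ‖‖s‖⁻¹ • s‖ = 1 := by
    rw [norm_smul, norm_inv, norm_norm, inv_mul_cancel₀ hs_pos.ne']
  have hle := csInf_le hbdd ⟨_, hunit, rfl⟩
  rw [map_smul, real_inner_smul_left, real_inner_smul_right, ← mul_assoc, ← pow_two,
    inv_pow, ← div_eq_inv_mul, le_div_iff₀ (by positivity)] at hle
  exact hle

section RegularizedStep

variable {E : Type*} [NormedAddCommGroup E] [InnerProductSpace ℝ E]
  {g s v : E} {lam μ ς : ℝ}

theorem le_model_decrease_of_norm_residual_le (hμ : 0 ≤ μ) (hcurv : -μ * ‖s‖ ^ 2 ≤ ⟪s, v⟫)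
    (hres : ‖v + (lam + μ) • s + g‖ ≤ ς * lam * ‖s‖) :
    (1 - ς) * lam * ‖s‖ ^ 2 ≤ -⟪g, s⟫ - 1 / 2 * ⟪s, v⟫ := by
  have hinner : ⟪v + (lam + μ) • s + g, s⟫ = ⟪s, v⟫ + (lam + μ) * ‖s‖ ^ 2 + ⟪g, s⟫ := by
    rw [inner_add_left, inner_add_left, real_inner_smul_left, real_inner_self_eq_norm_sq,
      real_inner_comm]
  have hres_s : ⟪v + (lam + μ) • s + g, s⟫ ≤ ς * lam * ‖s‖ ^ 2 := by
    calc _ ≤ ‖v + (lam + μ) • s + g‖ * ‖s‖ := real_inner_le_norm _ _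
      _ ≤ ς * lam * ‖s‖ * ‖s‖ := by gcongr
      _ = ς * lam * ‖s‖ ^ 2 := by ring
  nlinarith [sq_nonneg ‖s‖]

theorem norm_add_le_of_norm_residual_le (hlamμ : 0 ≤ lam + μ)
    (hres : ‖v + (lam + μ) • s + g‖ ≤ ς * lam * ‖s‖) :
    ‖g + v‖ ≤ (ς * lam + lam + μ) * ‖s‖ := by
  calc ‖g + v‖ = ‖(v + (lam + μ) • s + g) - (lam + μ) • s‖ := by congr 1; abel
    _ ≤ ‖v + (lam + μ) • s + g‖ + ‖(lam + μ) • s‖ := norm_sub_le _ _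
    _ ≤ ς * lam * ‖s‖ + (lam + μ) * ‖s‖ := by
      rw [norm_smul, Real.norm_of_nonneg hlamμ]; gcongr
    _ = (ς * lam + lam + μ) * ‖s‖ := by ring

end RegularizedStep

/-- The nonnegative root of `L / 2 * t ^ 2 + A * t = G`. -/
noncomputable def quadraticRoot (L A G : ℝ) : ℝ := (-A + Real.sqrt (A ^ 2 + 2 * L * G)) / L

theorem quadraticRoot_nonneg {L A G : ℝ} (hL : 0 < L) (hG : 0 ≤ G) : 0 ≤ quadraticRoot L A G := by
  have : A ≤ Real.sqrt (A ^ 2 + 2 * L * G) :=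
    Real.le_sqrt_of_sq_le (by nlinarith)
  exact div_nonneg (by linarith) hL.le

theorem quadraticRoot_le {L A G t : ℝ} (hL : 0 < L) (hA : 0 ≤ A) (ht : 0 ≤ t)
    (hG : G ≤ L / 2 * t ^ 2 + A * t) : quadraticRoot L A G ≤ t := by
  have : Real.sqrt (A ^ 2 + 2 * L * G) ≤ A + L * t :=
    Real.sqrt_le_iff.mpr ⟨by positivity, by nlinarith⟩
  rw [quadraticRoot, div_le_iff₀ hL]
  linarith

theorem decrease_successful_neig_step_general {n : ℕ}
    (f : EuclideanSpace ℝ (Fin n) → ℝ)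
    (Hess : EuclideanSpace ℝ (Fin n) → EuclideanSpace ℝ (Fin n) →L[ℝ] EuclideanSpace ℝ (Fin n))
    (LH : ℝ) (hLH : 0 < LH)
    (hHess : ∀ y, HasFDerivAt (gradient f) (Hess y) y)
    (hLip : ∀ y z, ‖Hess y - Hess z‖ ≤ LH * ‖y - z‖)
    (x s : EuclideanSpace ℝ (Fin n))
    (σ ς₃ κC κa η₁ : ℝ) (hσ : 0 < σ) (hς₃1 : ς₃ < 1)
    (hκC : 0 < κC) (hκa : 1 ≤ κa) (hη₁ : 0 < η₁)
    (μ : ℝ) (hμ : μ = max (-(lamMin fun v => Hess x v)) 0)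
    (hμκ : μ ≤ κC * Real.sqrt (σ * ‖gradient f x‖))
    (hres : ‖Hess x s + (Real.sqrt (σ * ‖gradient f x‖) + μ) • s + gradient f x‖
      ≤ ς₃ * Real.sqrt (σ * ‖gradient f x‖) * ‖s‖)
    (hacc : f x - f (x + s)
      ≥ η₁ * (-⟪gradient f x, s⟫ - (1 / 2) * ⟪s, Hess x s⟫)) :
    f x - f (x + s)
      ≥ η₁ * (1 - ς₃) * Real.sqrt (σ * ‖gradient f x‖)
          * ((-(2 + κC) * Real.sqrt (κa * σ * ‖gradient f x‖)
              + Real.sqrt ((2 + κC) ^ 2 * (κa * σ * ‖gradient f x‖)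
                  + 2 * LH * ‖gradient f (x + s)‖)) / LH) ^ 2 := by
  set g := gradient f x
  set lam := Real.sqrt (σ * ‖g‖)
  set A := (2 + κC) * Real.sqrt (κa * σ * ‖g‖)
  have hσg : 0 ≤ σ * ‖g‖ := by positivity
  have hμ0 : 0 ≤ μ := hμ ▸ le_max_right _ _
  have hcurv : -μ * ‖s‖ ^ 2 ≤ ⟪s, Hess x s⟫ :=
    le_trans (by gcongr; exact hμ ▸ neg_le.mp (le_max_left _ _))
      (lamMin_mul_norm_sq_le_inner (Hess x) s)
  have hmodel := le_model_decrease_of_norm_residual_le hμ0 hcurv hres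
  have hlamA : (2 + κC) * lam ≤ A :=
    mul_le_mul_of_nonneg_left (Real.sqrt_le_sqrt (by nlinarith)) (by positivity)
  have hstep : ‖g + Hess x s‖ ≤ A * ‖s‖ := by
    refine (norm_add_le_of_norm_residual_le (by positivity) hres).trans ?_
    gcongr; nlinarith
  have hgrad : ‖gradient f (x + s)‖ ≤ LH / 2 * ‖s‖ ^ 2 + A * ‖s‖ := by
    have := norm_add_sub_sub_fderiv_le_of_fderiv_lipschitz hHess hLip x s
    calc ‖gradient f (x + s)‖ = ‖(gradient f (x + s) - g - Hess x s) + (g + Hess x s)‖ := by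
          congr 1; abel
      _ ≤ _ := norm_add_le_of_le this hstep
  have hroot := quadraticRoot_le hLH (by positivity) (norm_nonneg s) hgrad
  have hA_sq : (2 + κC) ^ 2 * (κa * σ * ‖g‖) = A ^ 2 := by
    rw [mul_pow, Real.sq_sqrt (by positivity)]
  rw [hA_sq, neg_mul, ← quadraticRoot]
  calc η₁ * (1 - ς₃) * lam * quadraticRoot LH A ‖gradient f (x + s)‖ ^ 2
      ≤ η₁ * (1 - ς₃) * lam * ‖s‖ ^ 2 := by
        have : 0 ≤ η₁ * (1 - ς₃) * lam := by have := sub_pos.mpr hς₃1; positivity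
        gcongr
        exact quadraticRoot_nonneg hLH (norm_nonneg _)
    _ = η₁ * ((1 - ς₃) * lam * ‖s‖ ^ 2) := by ring
    _ ≤ f x - f (x + s) := (mul_le_mul_of_nonneg_left hmodel hη₁.le).trans hacc

/-- Lemma 3.3 of the paper, inequality (3.13), specialized to the regularized
Newton step: objective decrease at a successful iteration in terms of the next
gradient. -/
theorem decrease_successful_neig_step {n : ℕ}
    (f : EuclideanSpace ℝ (Fin n) → ℝ)
    (Hess : EuclideanSpace ℝ (Fin n) → EuclideanSpace ℝ (Fin n) →L[ℝ] EuclideanSpace ℝ (Fin n))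
    (LH : ℝ) (hLH : 0 < LH)
    (hf : ContDiff ℝ 2 f)
    (hHess : ∀ y, HasFDerivAt (gradient f) (Hess y) y)
    (hLip : ∀ y z, ‖Hess y - Hess z‖ ≤ LH * ‖y - z‖)
    (x s : EuclideanSpace ℝ (Fin n))
    (hg : gradient f x ≠ 0)
    (σ ς₃ κθ κC κa η₁ : ℝ) (hσ : 0 < σ) (hς₃0 : 0 ≤ ς₃) (hς₃1 : ς₃ < 1) (hκθ : 0 < κθ)
    (hκC : 0 < κC) (hκa : 1 ≤ κa) (hη₁ : 0 < η₁)
    (μ : ℝ) (hμ : μ = max (-(lamMin fun v => Hess x v)) 0)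
    (hμκ : μ ≤ κC * Real.sqrt (σ * ‖gradient f x‖))
    (hres : ‖Hess x s + (Real.sqrt (σ * ‖gradient f x‖) + μ) • s + gradient f x‖
      ≤ ς₃ * Real.sqrt (σ * ‖gradient f x‖) * ‖s‖)
    (hacc : f x - f (x + s)
      ≥ η₁ * (-⟪gradient f x, s⟫ - (1 / 2) * ⟪s, Hess x s⟫)) :
    f x - f (x + s)
      ≥ η₁ * (1 - ς₃) * Real.sqrt (σ * ‖gradient f x‖)
          * ((-(2 + κC) * Real.sqrt (κa * σ * ‖gradient f x‖)
              + Real.sqrt ((2 + κC) ^ 2 * (κa * σ * ‖gradient f x‖)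
                  + 2 * LH * ‖gradient f (x + s)‖)) / LH) ^ 2 :=
  decrease_successful_neig_step_general f Hess LH hLH hHess hLip x s σ ς₃ κC κa η₁ hσ hς₃1 hκC hκa
    hη₁ μ hμ hμκ hres hacc
end

section
/- Let f : ℝⁿ → ℝ be twice continuously differentiable with L_H-Lipschitz Hessian. Fix x ∈ ℝⁿ, set g := ∇f(x) and H := ∇²f(x), and let κ_B > 0 with ‖H‖ ≤ κ_B. Let σ > 0, suppose λ_min(H) ≤ 0, and let v ∈ ℝⁿ satisfy ‖v‖ = 1 and Hv = λ_min(H)·v. Set s := (−λ_min(H)/σ)·v. Then ‖∇f(x+s)‖ ≤ L_H κ_B²/(2σ²) + ‖g‖ + κ_B²/σ. -/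
open RealInnerProductSpace

/-!
The step `s` is a multiple of a unit eigenvector of `H = ∇²f(x)` with eigenvalue `λ`, so
`‖s‖ = |λ| / σ ≤ κ_B / σ` and `H s = λ s` has norm at most `κ_B² / σ`. Since the Hessian is
`L_H`-Lipschitz, the first-order Taylor expansion of `∇f` around `x` has remainder at most
`L_H ‖s‖² / 2`, and the triangle inequality `‖∇f(x+s)‖ ≤ ‖remainder‖ + ‖∇f(x)‖ + ‖H s‖` concludes.
-/

theorem norm_sub_sub_fderiv_le_of_lipschitz_fderiv {E F : Type*} [NormedAddCommGroup E]
    [NormedSpace ℝ E] [NormedAddCommGroup F] [NormedSpace ℝ F] {G : E → F}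
    {G' : E → E →L[ℝ] F} {L : ℝ} {x : E} (hG : ∀ y, HasFDerivAt G (G' y) y)
    (hL : ∀ y, ‖G' y - G' x‖ ≤ L * ‖y - x‖) (s : E) :
    ‖G (x + s) - G x - G' x s‖ ≤ L / 2 * ‖s‖ ^ 2 := by
  have hremainder : ∀ t, HasDerivAt (fun t : ℝ => G (x + t • s) - G x - t • G' x s)
      (G' (x + t • s) s - G' x s) t := by
    intro t
    have hline : HasDerivAt (fun t : ℝ => x + t • s) s t := by
      simpa using ((hasDerivAt_id t).smul_const s).const_add x
    have h := (((hG _).comp_hasDerivAt t hline).sub_const (G x)).sub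
      ((hasDerivAt_id t).smul_const (G' x s))
    rwa [one_smul] at h
  -- The remainder along `t ↦ x + t • s` vanishes at `t = 0` and its derivative is bounded by
  -- `L ‖s‖² t`, the derivative of `L ‖s‖² t² / 2`.
  have hbound : ∀ t ∈ Set.Ico (0 : ℝ) 1, ‖G' (x + t • s) s - G' x s‖ ≤ L * ‖s‖ ^ 2 * t := by
    intro t ht
    calc ‖G' (x + t • s) s - G' x s‖ = ‖(G' (x + t • s) - G' x) s‖ := rfl
      _ ≤ ‖G' (x + t • s) - G' x‖ * ‖s‖ := ContinuousLinearMap.le_opNorm _ s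
      _ ≤ L * ‖t • s‖ * ‖s‖ := by
          gcongr
          simpa using hL (x + t • s)
      _ = L * ‖s‖ ^ 2 * t := by
          rw [norm_smul, Real.norm_of_nonneg ht.1]; ring
  have hparabola : ∀ t, HasDerivAt (fun t : ℝ => L * ‖s‖ ^ 2 / 2 * t ^ 2) (L * ‖s‖ ^ 2 * t) t :=
    fun t => ((hasDerivAt_pow 2 t).const_mul _).congr_deriv (by push_cast; ring)
  have hat_one := image_norm_le_of_norm_deriv_right_le_deriv_boundary
    (fun t _ => (hremainder t).continuousAt.continuousWithinAt)
    (fun t _ => (hremainder t).hasDerivWithinAt)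
    (by simp) hparabola hbound (Set.right_mem_Icc.mpr zero_le_one)
  calc ‖G (x + s) - G x - G' x s‖ = ‖G (x + (1 : ℝ) • s) - G x - (1 : ℝ) • G' x s‖ := by
        rw [one_smul, one_smul]
    _ ≤ L * ‖s‖ ^ 2 / 2 * 1 ^ 2 := hat_one
    _ = L / 2 * ‖s‖ ^ 2 := by ring

theorem norm_le_opNorm_of_apply_eq_smul {𝕜 E : Type*} [NontriviallyNormedField 𝕜]
    [NormedAddCommGroup E] [NormedSpace 𝕜 E] {T : E →L[𝕜] E} {v : E} {μ : 𝕜}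
    (hv : ‖v‖ = 1) (hTv : T v = μ • v) : ‖μ‖ ≤ ‖T‖ := by
  simpa [hTv, norm_smul, hv] using T.le_opNorm v

theorem gradient_bound_so_step_general {n : ℕ}
    (f : EuclideanSpace ℝ (Fin n) → ℝ)
    (Hess : EuclideanSpace ℝ (Fin n) → EuclideanSpace ℝ (Fin n) →L[ℝ] EuclideanSpace ℝ (Fin n))
    (LH : ℝ)
    (hHess : ∀ y, HasFDerivAt (gradient f) (Hess y) y)
    (hLip : ∀ y z, ‖Hess y - Hess z‖ ≤ LH * ‖y - z‖)
    (x : EuclideanSpace ℝ (Fin n))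
    (κB : ℝ) (hHB : ‖Hess x‖ ≤ κB)
    (σ : ℝ) (hσ : 0 < σ)
    (v : EuclideanSpace ℝ (Fin n)) (hv : ‖v‖ = 1)
    (heig : Hess x v = lamMin (fun w => Hess x w) • v)
    (s : EuclideanSpace ℝ (Fin n))
    (hs : s = (-(lamMin fun w => Hess x w) / σ) • v) :
    ‖gradient f (x + s)‖
      ≤ LH * κB ^ 2 / (2 * σ ^ 2) + ‖gradient f x‖ + κB ^ 2 / σ := by
  set lam := lamMin fun w => Hess x w
  have hlam : |lam| ≤ κB := (norm_le_opNorm_of_apply_eq_smul hv heig).trans hHB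
  have hLH : 0 ≤ LH := by simpa [hv] using (norm_nonneg _).trans (hLip v 0)
  have hs_norm : ‖s‖ ≤ κB / σ := by
    rw [hs, norm_smul, hv, mul_one, Real.norm_eq_abs, abs_div, abs_neg, abs_of_pos hσ]
    gcongr
  have hHs : ‖Hess x s‖ ≤ κB ^ 2 / σ := by
    have hHs_eq : Hess x s = lam • s := by rw [hs, map_smul, heig, smul_comm]
    rw [hHs_eq, norm_smul, Real.norm_eq_abs, sq, mul_div_assoc]
    gcongr
    exact (abs_nonneg _).trans hlam
  have hrem := norm_sub_sub_fderiv_le_of_lipschitz_fderiv hHess (fun y => hLip y x) s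
  calc ‖gradient f (x + s)‖
      = ‖(gradient f (x + s) - gradient f x - Hess x s) + gradient f x + Hess x s‖ := by
        congr 1; abel
    _ ≤ LH / 2 * ‖s‖ ^ 2 + ‖gradient f x‖ + ‖Hess x s‖ :=
        (norm_add₃_le).trans (by gcongr)
    _ ≤ LH / 2 * (κB / σ) ^ 2 + ‖gradient f x‖ + κB ^ 2 / σ := by gcongr
    _ = LH * κB ^ 2 / (2 * σ ^ 2) + ‖gradient f x‖ + κB ^ 2 / σ := by ring

/-- Lemma 4.2 of the paper, inequality (4.8): gradient bound after a
second-order eigenstep of the SOAN2C algorithm. -/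
theorem gradient_bound_so_step {n : ℕ}
    (f : EuclideanSpace ℝ (Fin n) → ℝ)
    (Hess : EuclideanSpace ℝ (Fin n) → EuclideanSpace ℝ (Fin n) →L[ℝ] EuclideanSpace ℝ (Fin n))
    (LH : ℝ)
    (hf : ContDiff ℝ 2 f)
    (hHess : ∀ y, HasFDerivAt (gradient f) (Hess y) y)
    (hLip : ∀ y z, ‖Hess y - Hess z‖ ≤ LH * ‖y - z‖)
    (x : EuclideanSpace ℝ (Fin n))
    (κB : ℝ) (hκB : 0 < κB) (hHB : ‖Hess x‖ ≤ κB)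
    (σ : ℝ) (hσ : 0 < σ)
    (hlamneg : lamMin (fun w => Hess x w) ≤ 0)
    (v : EuclideanSpace ℝ (Fin n)) (hv : ‖v‖ = 1)
    (heig : Hess x v = lamMin (fun w => Hess x w) • v)
    (s : EuclideanSpace ℝ (Fin n))
    (hs : s = (-(lamMin fun w => Hess x w) / σ) • v) :
    ‖gradient f (x + s)‖
      ≤ LH * κB ^ 2 / (2 * σ ^ 2) + ‖gradient f x‖ + κB ^ 2 / σ :=
  gradient_bound_so_step_general f Hess LH hHess hLip x κB hHB σ hσ v hv heig s hs
end
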